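/- Let H = H₁ ⊕ H₂ and let Ω be the bounded self-adjoint operator with block form [[Ω₁, Γ],[Γ†, Ω₂]]. Define H₂c by O_Ω(H₁) = H₁ ⊕ H₂c. Then H₂c = O_{Ω₂}(Ran Γ†), the orbit of the closure of the range of Γ† under Ω₂. -/

import Mathlib

/-!
Let `K = O_Ω(H₁)` and `K₂ = O_{Ω₂}(Ran Γ†)`. Since `H₁ᗮ = H₂` and `K ⊇ H₁`, the claim is that
`y ↦ (0, y)` pulls `K` back to exactly `K₂`. That pullback is closed, contains `Γ† x` (as
`Ω (x, 0) - (Ω₁ x, 0)`) and is `Ω₂`-invariant (via `Ω (0, y) - (Γ y, 0)`), so it contains `K₂`.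
Conversely `{z | z₂ ∈ K₂}` is closed, contains `H₁` and is `Ω`-invariant because
`(Ω z)₂ = Γ† z₁ + Ω₂ z₂`, so it contains `K`.
-/

open ContinuousLinearMap MeasureTheory

/-- The orbit of a set `S` under an operator `Ω`: the smallest closed `Ω`-invariant
subspace containing `S`. -/
noncomputable def orbit {H : Type*} [NormedAddCommGroup H] [InnerProductSpace ℂ H]
    (Ω : H →L[ℂ] H) (S : Set H) : Submodule ℂ H :=
  sInf {K : Submodule ℂ H | S ⊆ K ∧ IsClosed (K : Set H) ∧ ∀ x ∈ K, Ω x ∈ K}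

variable {H₁ H₂ : Type*} [NormedAddCommGroup H₁] [InnerProductSpace ℂ H₁] [CompleteSpace H₁]
  [NormedAddCommGroup H₂] [InnerProductSpace ℂ H₂] [CompleteSpace H₂]

/-- Inclusion of `H₁` into the Hilbert space direct sum `H₁ ⊕ H₂`. -/
noncomputable def inl' : H₁ →L[ℂ] WithLp 2 (H₁ × H₂) :=
  (WithLp.prodContinuousLinearEquiv 2 ℂ H₁ H₂).symm.toContinuousLinearMap ∘L
    ContinuousLinearMap.inl ℂ H₁ H₂

/-- Inclusion of `H₂` into the Hilbert space direct sum `H₁ ⊕ H₂`. -/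
noncomputable def inr' : H₂ →L[ℂ] WithLp 2 (H₁ × H₂) :=
  (WithLp.prodContinuousLinearEquiv 2 ℂ H₁ H₂).symm.toContinuousLinearMap ∘L
    ContinuousLinearMap.inr ℂ H₁ H₂

/-- The block operator `[[Ω₁, Γ], [Γ†, Ω₂]]` on `H₁ ⊕ H₂`. -/
noncomputable def blockOp (Ω₁ : H₁ →L[ℂ] H₁) (Ω₂ : H₂ →L[ℂ] H₂) (Γ : H₂ →L[ℂ] H₁) :
    WithLp 2 (H₁ × H₂) →L[ℂ] WithLp 2 (H₁ × H₂) :=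
  (WithLp.prodContinuousLinearEquiv 2 ℂ H₁ H₂).symm.toContinuousLinearMap ∘L
    ((Ω₁ ∘L ContinuousLinearMap.fst ℂ H₁ H₂ + Γ ∘L ContinuousLinearMap.snd ℂ H₁ H₂).prod
      ((ContinuousLinearMap.adjoint Γ) ∘L ContinuousLinearMap.fst ℂ H₁ H₂ +
        Ω₂ ∘L ContinuousLinearMap.snd ℂ H₁ H₂)) ∘L
    (WithLp.prodContinuousLinearEquiv 2 ℂ H₁ H₂).toContinuousLinearMap

/-- `H₁` as a subspace of `H₁ ⊕ H₂`. -/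
noncomputable def sub1 : Submodule ℂ (WithLp 2 (H₁ × H₂)) := LinearMap.range ((inl' : H₁ →L[ℂ] WithLp 2 (H₁ × H₂)) : H₁ →ₗ[ℂ] WithLp 2 (H₁ × H₂))

/-- `H₂` as a subspace of `H₁ ⊕ H₂`. -/
noncomputable def sub2 : Submodule ℂ (WithLp 2 (H₁ × H₂)) := LinearMap.range ((inr' : H₂ →L[ℂ] WithLp 2 (H₁ × H₂)) : H₂ →ₗ[ℂ] WithLp 2 (H₁ × H₂))

section Orbit

variable {H : Type*} [NormedAddCommGroup H] [InnerProductSpace ℂ H] (Ω : H →L[ℂ] H) (S : Set H)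

lemma subset_orbit : S ⊆ orbit Ω S :=
  fun _ hx => Submodule.mem_sInf.2 fun _ hK => hK.1 hx

lemma isClosed_orbit : IsClosed (orbit Ω S : Set H) := by
  rw [orbit, Submodule.coe_sInf]
  exact isClosed_biInter fun _ hK => hK.2.1

lemma apply_mem_orbit {x : H} (hx : x ∈ orbit Ω S) : Ω x ∈ orbit Ω S :=
  Submodule.mem_sInf.2 fun K hK => hK.2.2 x (Submodule.mem_sInf.1 hx K hK)

lemma orbit_le {K : Submodule ℂ H} (hS : S ⊆ K) (hK : IsClosed (K : Set H))
    (hΩ : ∀ x ∈ K, Ω x ∈ K) : orbit Ω S ≤ K :=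
  sInf_le ⟨hS, hK, hΩ⟩

lemma isClosed_comap_orbit {E : Type*} [AddCommGroup E] [Module ℂ E] [TopologicalSpace E]
    (f : E →L[ℂ] H) : IsClosed ((orbit Ω S).comap (f : E →ₗ[ℂ] H) : Set E) :=
  (isClosed_orbit Ω S).preimage f.continuous

end Orbit

lemma WithLp.prod_ext {p : ENNReal} {α β : Type*} {z w : WithLp p (α × β)}
    (hfst : z.fst = w.fst) (hsnd : z.snd = w.snd) : z = w :=
  WithLp.ofLp_injective p (Prod.ext hfst hsnd)

set_option linter.unusedSectionVars false in
lemma orthogonal_sub1 : (sub1 : Submodule ℂ (WithLp 2 (H₁ × H₂)))ᗮ = sub2 := by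
  apply le_antisymm
  · intro z hz
    have hfst : z.fst = 0 := by
      have h := (Submodule.mem_orthogonal _ _).1 hz (inl' z.fst) ⟨z.fst, rfl⟩
      simpa [inl', WithLp.prod_inner_apply] using h
    exact ⟨z.snd, WithLp.prod_ext hfst.symm rfl⟩
  · rintro _ ⟨y, rfl⟩
    rw [Submodule.mem_orthogonal]
    rintro _ ⟨x, rfl⟩
    simp [inl', inr', WithLp.prod_inner_apply]

section Block

variable (Ω₁ : H₁ →L[ℂ] H₁) (Ω₂ : H₂ →L[ℂ] H₂) (Γ : H₂ →L[ℂ] H₁)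

lemma blockOp_fst (z : WithLp 2 (H₁ × H₂)) :
    (blockOp Ω₁ Ω₂ Γ z).fst = Ω₁ z.fst + Γ z.snd := rfl

lemma blockOp_snd (z : WithLp 2 (H₁ × H₂)) :
    (blockOp Ω₁ Ω₂ Γ z).snd = adjoint Γ z.fst + Ω₂ z.snd := rfl

lemma blockOp_inl' (x : H₁) :
    blockOp Ω₁ Ω₂ Γ (inl' x) = inl' (Ω₁ x) + inr' (adjoint Γ x) :=
  WithLp.prod_ext (by simp [blockOp_fst, inl', inr']) (by simp [blockOp_snd, inl', inr'])

lemma blockOp_inr' (y : H₂) :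
    blockOp Ω₁ Ω₂ Γ (inr' y) = inl' (Γ y) + inr' (Ω₂ y) :=
  WithLp.prod_ext (by simp [blockOp_fst, inl', inr']) (by simp [blockOp_snd, inl', inr'])

lemma orbit_le_comap_inr' :
    orbit Ω₂ (Set.range (adjoint Γ)) ≤
      (orbit (blockOp Ω₁ Ω₂ Γ) (sub1 : Submodule ℂ (WithLp 2 (H₁ × H₂)))).comap
        ((inr' : H₂ →L[ℂ] WithLp 2 (H₁ × H₂)) : H₂ →ₗ[ℂ] WithLp 2 (H₁ × H₂)) := by
  set K := orbit (blockOp Ω₁ Ω₂ Γ) (sub1 : Submodule ℂ (WithLp 2 (H₁ × H₂)))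
  have hinl' (x : H₁) : inl' x ∈ K := subset_orbit _ _ ⟨x, rfl⟩
  apply orbit_le
  · rintro _ ⟨x, rfl⟩
    have h := apply_mem_orbit _ _ (hinl' x)
    rw [blockOp_inl'] at h
    exact (K.add_mem_iff_right (hinl' (Ω₁ x))).1 h
  · exact isClosed_comap_orbit _ _ _
  · intro y hy
    have h := apply_mem_orbit _ _ (show inr' y ∈ K from hy)
    rw [blockOp_inr'] at h
    exact (K.add_mem_iff_right (hinl' (Γ y))).1 h

lemma orbit_blockOp_le_comap_snd :
    orbit (blockOp Ω₁ Ω₂ Γ) (sub1 : Submodule ℂ (WithLp 2 (H₁ × H₂))) ≤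
      (orbit Ω₂ (Set.range (adjoint Γ))).comap
        (WithLp.sndL 2 ℂ H₁ H₂ : WithLp 2 (H₁ × H₂) →ₗ[ℂ] H₂) := by
  apply orbit_le
  · rintro _ ⟨x, rfl⟩
    exact (orbit Ω₂ _).zero_mem
  · exact isClosed_comap_orbit _ _ _
  · intro z hz
    change (blockOp Ω₁ Ω₂ Γ z).snd ∈ orbit Ω₂ _
    rw [blockOp_snd]
    exact add_mem (subset_orbit _ _ ⟨z.fst, rfl⟩) (apply_mem_orbit _ _ hz)

lemma comap_inr'_orbit_blockOp :
    (orbit (blockOp Ω₁ Ω₂ Γ) (sub1 : Submodule ℂ (WithLp 2 (H₁ × H₂)))).comap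
      ((inr' : H₂ →L[ℂ] WithLp 2 (H₁ × H₂)) : H₂ →ₗ[ℂ] WithLp 2 (H₁ × H₂)) =
      orbit Ω₂ (Set.range (adjoint Γ)) :=
  le_antisymm (fun _ hy => orbit_blockOp_le_comap_snd Ω₁ Ω₂ Γ hy)
    (orbit_le_comap_inr' Ω₁ Ω₂ Γ)

end Block

theorem coupled_part_eq_orbit_range_adjoint_general
    (Ω₁ : H₁ →L[ℂ] H₁) (Ω₂ : H₂ →L[ℂ] H₂) (Γ : H₂ →L[ℂ] H₁) :
    orbit (blockOp Ω₁ Ω₂ Γ) (sub1 : Submodule ℂ (WithLp 2 (H₁ × H₂))) ⊓ (sub1 : Submodule ℂ (WithLp 2 (H₁ × H₂)))ᗮ =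
      Submodule.map ((inr' : H₂ →L[ℂ] WithLp 2 (H₁ × H₂)) : H₂ →ₗ[ℂ] WithLp 2 (H₁ × H₂))
        (orbit Ω₂ (Set.range (ContinuousLinearMap.adjoint Γ))) := by
  rw [orthogonal_sub1, sub2, inf_comm, ← Submodule.map_comap_eq, comap_inr'_orbit_blockOp]

/-- with `Ω = [[Ω₁, Γ], [Γ†, Ω₂]]` and `H₂c` defined by
`O_Ω(H₁) = H₁ ⊕ H₂c`, one has `H₂c = O_{Ω₂}(Ran Γ†)`. -/
theorem coupled_part_eq_orbit_range_adjoint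
    (Ω₁ : H₁ →L[ℂ] H₁) (Ω₂ : H₂ →L[ℂ] H₂) (Γ : H₂ →L[ℂ] H₁)
    (hΩ₁ : IsSelfAdjoint Ω₁) (hΩ₂ : IsSelfAdjoint Ω₂) :
    orbit (blockOp Ω₁ Ω₂ Γ) (sub1 : Submodule ℂ (WithLp 2 (H₁ × H₂))) ⊓ (sub1 : Submodule ℂ (WithLp 2 (H₁ × H₂)))ᗮ =
      Submodule.map ((inr' : H₂ →L[ℂ] WithLp 2 (H₁ × H₂)) : H₂ →ₗ[ℂ] WithLp 2 (H₁ × H₂))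
        (orbit Ω₂ (Set.range (ContinuousLinearMap.adjoint Γ))) :=
  coupled_part_eq_orbit_range_adjoint_general Ω₁ Ω₂ Γ
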